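/- If the basic E_n-on-E connection is defined as the family ∇̄^{E_n}_ê e = •∇^{E_n}_ê e − κ_n T^{•∇^{E_n}}(e^{(1)},…,e^{(n)},e) and the higher average connection is ∇^{E_n,avg} = (1/2)(•∇^{E_n} + ∇̄^{E_n}), then the polytorsion of the average connection vanishes, T^{∇^{E_n,avg}} = 0, if and only if κ_n = 2/(n+1). -/

import Mathlib

open scoped BigOperators

noncomputable section

/-- Points of the local chart. -/
abbrev Pt (d : ℕ) := Fin d → ℝ

/-- Partial derivative `∂_i f` at `x`. -/
def pd {d : ℕ} (i : Fin d) (f : Pt d → ℝ) (x : Pt d) : ℝ :=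
  fderiv ℝ f x (Pi.single i 1)

/-- Lie derivative of a 1-form `e` along a vector field `X`:
`(L_X e)_μ = X^ν ∂_ν e_μ + e_ν ∂_μ X^ν`. -/
def lieD {d : ℕ} (X e : Pt d → Fin d → ℝ) : Pt d → Fin d → ℝ :=
  fun x μ => ∑ ν, (X x ν * pd ν (fun y => e y μ) x + e x ν * pd μ (fun y => X y ν) x)

/-- Action of a vector field on a function, `X f = X^ν ∂_ν f`. -/
def act {d : ℕ} (X : Pt d → Fin d → ℝ) (f : Pt d → ℝ) (x : Pt d) : ℝ :=
  ∑ ν, X x ν * pd ν f x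

/-- The vector field `Π(e)`, `(Π(e))^ν = Π^{μν} e_μ`. -/
def sharp {d : ℕ} (P : Pt d → Fin d → Fin d → ℝ) (e : Pt d → Fin d → ℝ) :
    Pt d → Fin d → ℝ :=
  fun x ν => ∑ μ, P x μ ν * e x μ

/-- Full contraction `Π(e,e') = Π^{μν} e_μ e'_ν`. -/
def pairP {d : ℕ} (P : Pt d → Fin d → Fin d → ℝ) (e e' : Pt d → Fin d → ℝ) :
    Pt d → ℝ :=
  fun x => ∑ μ, ∑ ν, P x μ ν * e x μ * e' x ν

/-- The Koszul bracket `b₂(e,e') = L_{Π(e)}e' − L_{Π(e')}e − d(Π(e,e'))`. -/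
def kb {d : ℕ} (P : Pt d → Fin d → Fin d → ℝ) (e e' : Pt d → Fin d → ℝ) :
    Pt d → Fin d → ℝ :=
  fun x μ => lieD (sharp P e) e' x μ - lieD (sharp P e') e x μ - pd μ (pairP P e e') x

/-- Interior product with the de Rham differential: `(ι_X de)_μ = X^ν(∂_ν e_μ − ∂_μ e_ν)`. -/
def iotaD {d : ℕ} (X e : Pt d → Fin d → ℝ) : Pt d → Fin d → ℝ :=
  fun x μ => ∑ ν, X x ν * (pd ν (fun y => e y μ) x - pd μ (fun y => e y ν) x)

/-- The de Rham differential of a function, as a 1-form. -/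
def dF {d : ℕ} (f : Pt d → ℝ) : Pt d → Fin d → ℝ := fun x μ => pd μ f x

/-- The anchor map of the `(n+1)`-vector `R` on decomposable `n`-forms:
`R(e₁∧…∧eₙ)^ν = R^{μ₁…μₙν} e₁_{μ₁}…eₙ_{μₙ}`. -/
def Rc {d n : ℕ} (R : Pt d → (Fin (n+1) → Fin d) → ℝ)
    (f : Fin n → (Pt d → Fin d → ℝ)) : Pt d → Fin d → ℝ :=
  fun x ν => ∑ μ : Fin n → Fin d, R x (Fin.snoc μ ν) * ∏ i, f i x (μ i)

/-- Full contraction `R(e^{(1)},…,e^{(n+1)}) = R^{μ₁…μ_{n+1}} e^{(1)}_{μ₁}…e^{(n+1)}_{μ_{n+1}}`. -/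
def Rfull {d n : ℕ} (R : Pt d → (Fin (n+1) → Fin d) → ℝ)
    (e : Fin (n+1) → (Pt d → Fin d → ℝ)) : Pt d → ℝ :=
  fun x => ∑ μ : Fin (n+1) → Fin d, R x μ * ∏ i, e i x (μ i)

/-- Total antisymmetry of the component functions of a multivector field. -/
def Antisym {d m : ℕ} (R : Pt d → (Fin m → Fin d) → ℝ) : Prop :=
  ∀ (x : Pt d) (σ : Equiv.Perm (Fin m)) (μ : Fin m → Fin d),
    R x (μ ∘ σ) = ((Equiv.Perm.sign σ : ℤ) : ℝ) * R x μ

/-- Smoothness of (the components of) a 1-form. -/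
def SmForm {d : ℕ} (e : Pt d → Fin d → ℝ) : Prop := ∀ μ, ContDiff ℝ (⊤ : ℕ∞) (fun x => e x μ)

/-- Smoothness of the components of a multivector field. -/
def SmMV {d m : ℕ} (R : Pt d → (Fin m → Fin d) → ℝ) : Prop :=
  ∀ μ, ContDiff ℝ (⊤ : ℕ∞) (fun x => R x μ)

/-- Covariant derivative of a 1-form along a vector field,
`(∇_X e)_λ = X^μ(∂_μ e_λ − Γ^ρ_{μλ} e_ρ)`. -/
def covd {d : ℕ} (Γ : Pt d → Fin d → Fin d → Fin d → ℝ)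
    (X e : Pt d → Fin d → ℝ) : Pt d → Fin d → ℝ :=
  fun x lam => ∑ μ, X x μ * (pd μ (fun y => e y lam) x - ∑ ρ, Γ x ρ μ lam * e x ρ)

/-- The `(n+1)`-ary Koszul bracket (interior-product form). -/
def bKos {d n : ℕ} (R : Pt d → (Fin (n+1) → Fin d) → ℝ)
    (e : Fin (n+1) → (Pt d → Fin d → ℝ)) : Pt d → Fin d → ℝ :=
  fun x μ =>
    (∑ r : Fin (n+1), (-1 : ℝ) ^ (n + r.val) * iotaD (Rc R (e ∘ r.succAbove)) (e r) x μ)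
      + pd μ (Rfull R e) x

/-- The polytorsion of the canonical induced connection `•∇^{E_n}_ê = ∇_{R(ê)}`. -/
def basePT {d n : ℕ} (Γ : Pt d → Fin d → Fin d → Fin d → ℝ)
    (R : Pt d → (Fin (n+1) → Fin d) → ℝ)
    (e : Fin (n+1) → (Pt d → Fin d → ℝ)) : Pt d → Fin d → ℝ :=
  fun x μ =>
    (∑ r : Fin (n+1), (-1 : ℝ) ^ (n + r.val) * covd Γ (Rc R (e ∘ r.succAbove)) (e r) x μ)
      - bKos R e x μ

/-- The basic (opposite) `E_n`-on-`E` connection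
`∇̄^{E_n}_ê e = •∇^{E_n}_ê e − κ T^{•∇^{E_n}}(e^{(1)},…,e^{(n)},e)`. -/
def Dbar {d n : ℕ} (κ : ℝ) (Γ : Pt d → Fin d → Fin d → Fin d → ℝ)
    (R : Pt d → (Fin (n+1) → Fin d) → ℝ)
    (f : Fin n → (Pt d → Fin d → ℝ)) (e : Pt d → Fin d → ℝ) : Pt d → Fin d → ℝ :=
  fun x μ => covd Γ (Rc R f) e x μ - κ * basePT Γ R (Fin.snoc f e) x μ

/-- The higher average connection `∇^{E_n,avg} = (1/2)(•∇^{E_n} + ∇̄^{E_n})`. -/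
def Davg {d n : ℕ} (κ : ℝ) (Γ : Pt d → Fin d → Fin d → Fin d → ℝ)
    (R : Pt d → (Fin (n+1) → Fin d) → ℝ)
    (f : Fin n → (Pt d → Fin d → ℝ)) (e : Pt d → Fin d → ℝ) : Pt d → Fin d → ℝ :=
  fun x μ => (1/2) * (covd Γ (Rc R f) e x μ + Dbar κ Γ R f e x μ)

/-- The polytorsion of the average connection. -/
def avgPT {d n : ℕ} (κ : ℝ) (Γ : Pt d → Fin d → Fin d → Fin d → ℝ)
    (R : Pt d → (Fin (n+1) → Fin d) → ℝ)
    (e : Fin (n+1) → (Pt d → Fin d → ℝ)) : Pt d → Fin d → ℝ :=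
  fun x μ =>
    (∑ r : Fin (n+1), (-1 : ℝ) ^ (n + r.val) * Davg κ Γ R (e ∘ r.succAbove) (e r) x μ)
      - bKos R e x μ

-- Fin combinatorics lemmas
section FinLemmas
variable {n : ℕ}

lemma swap_comp_succAbove (i : Fin n) :
    ⇑(Equiv.swap i.castSucc i.succ) ∘ (i.succ).succAbove = (i.castSucc).succAbove := by
  funext j
  have hne : ∀ a b : Fin (n+1), a.val ≠ b.val → a ≠ b := fun a b h => by
    simp only [ne_eq, Fin.ext_iff]; exact h
  rcases lt_trichotomy j.val i.val with h | h | h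
  · have h1 : j.castSucc < i.succ := by
      simp only [Fin.lt_def, Fin.coe_castSucc, Fin.val_succ]; omega
    have h2 : j.castSucc < i.castSucc := by
      simp only [Fin.lt_def, Fin.coe_castSucc]; omega
    rw [Function.comp_apply, Fin.succAbove_of_castSucc_lt _ _ h1,
      Fin.succAbove_of_castSucc_lt _ _ h2,
      Equiv.swap_apply_of_ne_of_ne (hne _ _ (by simp; omega)) (hne _ _ (by simp; omega))]
  · have hj : j.castSucc = i.castSucc := by
      simp only [Fin.ext_iff, Fin.coe_castSucc]; omega
    have h1 : j.castSucc < i.succ := by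
      simp only [Fin.lt_def, Fin.coe_castSucc, Fin.val_succ]; omega
    rw [Function.comp_apply, Fin.succAbove_of_castSucc_lt _ _ h1, hj,
      Equiv.swap_apply_left, Fin.succAbove_of_le_castSucc _ _ (le_of_eq hj.symm)]
    simp only [Fin.ext_iff, Fin.val_succ]; omega
  · have h1 : i.succ ≤ j.castSucc := by
      simp only [Fin.le_def, Fin.coe_castSucc, Fin.val_succ]; omega
    rw [Function.comp_apply, Fin.succAbove_of_le_castSucc _ _ h1,
      Fin.succAbove_of_le_castSucc _ _ (by simp only [Fin.le_def, Fin.coe_castSucc]; omega),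
      Equiv.swap_apply_of_ne_of_ne (hne _ _ (by simp; omega)) (hne _ _ (by simp; omega))]

lemma swap_comp_succAbove' (i : Fin n) :
    ⇑(Equiv.swap i.castSucc i.succ) ∘ (i.castSucc).succAbove = (i.succ).succAbove := by
  funext j
  rw [Function.comp_apply, ← congrFun (swap_comp_succAbove i) j, Function.comp_apply,
    Equiv.swap_apply_self]

lemma snoc_comp_swap {d : ℕ} (μ : Fin n → Fin d) (ν : Fin d) (a b : Fin n) :
    Fin.snoc (μ ∘ ⇑(Equiv.swap a b)) ν
      = (Fin.snoc μ ν : Fin (n+1) → Fin d) ∘ ⇑(Equiv.swap a.castSucc b.castSucc) := by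
  funext i
  induction i using Fin.lastCases with
  | last =>
    rw [Function.comp_apply,
      Equiv.swap_apply_of_ne_of_ne (Fin.castSucc_lt_last a).ne' (Fin.castSucc_lt_last b).ne']
    simp
  | cast j =>
    rw [Function.comp_apply, Fin.castSucc_injective n |>.swap_apply, Fin.snoc_castSucc,
      Fin.snoc_castSucc, Function.comp_apply]
end FinLemmas
section AlgLemmas
variable {d n : ℕ}

/-- Precomposition by a permutation, as an equivalence of function types. -/
def precompEquiv {α β : Type*} (σ : Equiv.Perm α) : (α → β) ≃ (α → β) :=
  ⟨fun μ => μ ∘ ⇑σ, fun μ => μ ∘ ⇑σ.symm,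
   fun μ => by funext j; simp, fun μ => by funext j; simp⟩

lemma Rc_swap {R : Pt d → (Fin (n+1) → Fin d) → ℝ} (hR : Antisym R)
    (f : Fin n → (Pt d → Fin d → ℝ)) {a b : Fin n} (hab : a ≠ b) :
    Rc R (f ∘ ⇑(Equiv.swap a b)) = fun x ν => -(Rc R f x ν) := by
  funext x ν
  unfold Rc
  rw [← Finset.sum_neg_distrib]
  apply Fintype.sum_equiv (precompEquiv (Equiv.swap a b))
  intro μ
  show R x (Fin.snoc μ ν) * ∏ i, f (Equiv.swap a b i) x (μ i)
      = -(R x (Fin.snoc (μ ∘ ⇑(Equiv.swap a b)) ν) * ∏ i, f i x (μ (Equiv.swap a b i)))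
  have hprod : ∏ i, f (Equiv.swap a b i) x (μ i) = ∏ i, f i x (μ (Equiv.swap a b i)) := by
    rw [← Equiv.prod_comp (Equiv.swap a b) (fun j => f j x (μ (Equiv.swap a b j)))]
    simp [Equiv.swap_apply_self]
  have hRR : R x (Fin.snoc (μ ∘ ⇑(Equiv.swap a b)) ν) = -R x (Fin.snoc μ ν) := by
    rw [snoc_comp_swap, hR x (Equiv.swap a.castSucc b.castSucc),
      Equiv.Perm.sign_swap (by simpa using hab)]
    simp
  rw [hprod, hRR]; ring

lemma Rfull_swap {R : Pt d → (Fin (n+1) → Fin d) → ℝ} (hR : Antisym R)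
    (e : Fin (n+1) → (Pt d → Fin d → ℝ)) {a b : Fin (n+1)} (hab : a ≠ b) :
    Rfull R (e ∘ ⇑(Equiv.swap a b)) = fun x => -(Rfull R e x) := by
  funext x
  unfold Rfull
  rw [← Finset.sum_neg_distrib]
  apply Fintype.sum_equiv (precompEquiv (Equiv.swap a b))
  intro μ
  show R x μ * ∏ i, e (Equiv.swap a b i) x (μ i)
      = -(R x (μ ∘ ⇑(Equiv.swap a b)) * ∏ i, e i x (μ (Equiv.swap a b i)))
  have hprod : ∏ i, e (Equiv.swap a b i) x (μ i) = ∏ i, e i x (μ (Equiv.swap a b i)) := by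
    rw [← Equiv.prod_comp (Equiv.swap a b) (fun j => e j x (μ (Equiv.swap a b j)))]
    simp [Equiv.swap_apply_self]
  have hRR : R x (μ ∘ ⇑(Equiv.swap a b)) = -R x μ := by
    rw [hR x (Equiv.swap a b), Equiv.Perm.sign_swap hab]; simp
  rw [hprod, hRR]; ring

lemma covd_neg (Γ : Pt d → Fin d → Fin d → Fin d → ℝ) (X e : Pt d → Fin d → ℝ)
    (x : Pt d) (μ : Fin d) :
    covd Γ (fun x ν => -(X x ν)) e x μ = -(covd Γ X e x μ) := by
  simp [covd, neg_mul, Finset.sum_neg_distrib]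

lemma iotaD_neg (X e : Pt d → Fin d → ℝ) (x : Pt d) (μ : Fin d) :
    iotaD (fun x ν => -(X x ν)) e x μ = -(iotaD X e x μ) := by
  simp [iotaD, neg_mul, Finset.sum_neg_distrib]

lemma pd_neg (μ : Fin d) (F : Pt d → ℝ) (x : Pt d) :
    pd μ (fun y => -(F y)) x = -(pd μ F x) := by
  unfold pd; rw [fderiv_fun_neg]; simp

end AlgLemmas
section SwapLemmas
variable {d n : ℕ}

lemma sum_term_swap {R : Pt d → (Fin (n+1) → Fin d) → ℝ} (hR : Antisym R)
    (e : Fin (n+1) → (Pt d → Fin d → ℝ)) (i : Fin n)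
    (Φ : (Pt d → Fin d → ℝ) → (Pt d → Fin d → ℝ) → ℝ)
    (hΦ : ∀ X g, Φ (fun x ν => -(X x ν)) g = -(Φ X g)) :
    ∑ r : Fin (n+1), (-1:ℝ)^(n+r.val) *
        Φ (Rc R ((e ∘ ⇑(Equiv.swap i.castSucc i.succ)) ∘ r.succAbove))
          ((e ∘ ⇑(Equiv.swap i.castSucc i.succ)) r)
      = -∑ r : Fin (n+1), (-1:ℝ)^(n+r.val) * Φ (Rc R (e ∘ r.succAbove)) (e r) := by
  have hcs : i.castSucc ≠ i.succ := (Fin.castSucc_lt_succ (i := i)).ne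
  rw [← Finset.sum_neg_distrib]
  apply Fintype.sum_equiv (Equiv.swap i.castSucc i.succ)
  intro r
  show (-1:ℝ)^(n+r.val) *
      Φ (Rc R ((e ∘ ⇑(Equiv.swap i.castSucc i.succ)) ∘ r.succAbove))
        (e (Equiv.swap i.castSucc i.succ r))
    = -((-1:ℝ)^(n+(Equiv.swap i.castSucc i.succ r).val) *
        Φ (Rc R (e ∘ (Equiv.swap i.castSucc i.succ r).succAbove))
          (e (Equiv.swap i.castSucc i.succ r)))
  have hassoc : ∀ (g : Fin n → Fin (n+1)),
      (e ∘ ⇑(Equiv.swap i.castSucc i.succ)) ∘ g = e ∘ (⇑(Equiv.swap i.castSucc i.succ) ∘ g) :=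
    fun g => rfl
  by_cases h1 : r = i.castSucc
  · subst h1
    rw [hassoc, swap_comp_succAbove', Equiv.swap_apply_left]
    have : (n + (i.succ : Fin (n+1)).val) = (n + (i.castSucc : Fin (n+1)).val) + 1 := by
      simp [Fin.val_succ, Fin.coe_castSucc]; omega
    rw [this, pow_succ]
    ring
  · by_cases h2 : r = i.succ
    · subst h2
      rw [hassoc, swap_comp_succAbove, Equiv.swap_apply_right]
      have : (n + (i.succ : Fin (n+1)).val) = (n + (i.castSucc : Fin (n+1)).val) + 1 := by
        simp [Fin.val_succ, Fin.coe_castSucc]; omega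
      rw [this, pow_succ]
      ring
    · rw [Equiv.swap_apply_of_ne_of_ne h1 h2]
      obtain ⟨a, ha⟩ := Fin.exists_succAbove_eq (Ne.symm h1)
      obtain ⟨b, hb⟩ := Fin.exists_succAbove_eq (Ne.symm h2)
      have hab : a ≠ b := by
        intro h; apply hcs; rw [← ha, ← hb, h]
      have hcomp : ⇑(Equiv.swap i.castSucc i.succ) ∘ r.succAbove
          = r.succAbove ∘ ⇑(Equiv.swap a b) := by
        funext j
        rw [Function.comp_apply, Function.comp_apply, ← ha, ← hb,
          (Fin.succAbove_right_injective (p := r)).swap_apply]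
      rw [hassoc, hcomp, ← Function.comp_assoc, Rc_swap hR _ hab, hΦ]
      ring

lemma basePT_swap (Γ : Pt d → Fin d → Fin d → Fin d → ℝ)
    {R : Pt d → (Fin (n+1) → Fin d) → ℝ} (hR : Antisym R)
    (e : Fin (n+1) → (Pt d → Fin d → ℝ)) (i : Fin n) :
    basePT Γ R (e ∘ ⇑(Equiv.swap i.castSucc i.succ)) = fun x μ => -(basePT Γ R e x μ) := by
  funext x μ
  unfold basePT bKos
  rw [sum_term_swap hR e i (fun X g => covd Γ X g x μ) (fun X g => covd_neg Γ X g x μ),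
    sum_term_swap hR e i (fun X g => iotaD X g x μ) (fun X g => iotaD_neg X g x μ),
    Rfull_swap hR e (Fin.castSucc_lt_succ (i := i)).ne, pd_neg]
  ring

end SwapLemmas
section CycleMaster
variable {d n : ℕ}

lemma basePT_cycle (Γ : Pt d → Fin d → Fin d → Fin d → ℝ)
    {R : Pt d → (Fin (n+1) → Fin d) → ℝ} (hR : Antisym R) :
    ∀ (r : Fin (n+1)) (e : Fin (n+1) → (Pt d → Fin d → ℝ)),
      basePT Γ R (Fin.snoc (e ∘ r.succAbove) (e r))
        = fun x μ => (-1:ℝ)^(n - r.val) * basePT Γ R e x μ := by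
  intro r
  induction r using Fin.reverseInduction with
  | last =>
    intro e
    have h : Fin.snoc (e ∘ (Fin.last n).succAbove) (e (Fin.last n)) = e := by
      funext j
      induction j using Fin.lastCases with
      | last => simp
      | cast j => simp [Fin.succAbove_last]
    rw [h]
    funext x μ
    simp
  | cast i ih =>
    intro e
    have key : Fin.snoc (e ∘ (i.castSucc).succAbove) (e i.castSucc)
        = (Fin.snoc ((e ∘ ⇑(Equiv.swap i.castSucc i.succ)) ∘ (i.succ).succAbove)
            ((e ∘ ⇑(Equiv.swap i.castSucc i.succ)) i.succ)
            : Fin (n+1) → (Pt d → Fin d → ℝ)) := by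
      funext j
      induction j using Fin.lastCases with
      | last => simp [Equiv.swap_apply_right]
      | cast j =>
        rw [Fin.snoc_castSucc, Fin.snoc_castSucc, Function.comp_apply, Function.comp_apply,
          Function.comp_apply,
          show (Equiv.swap i.castSucc i.succ) ((i.succ).succAbove j) = (i.castSucc).succAbove j
            from congrFun (swap_comp_succAbove i) j]
    rw [key, ih (e ∘ ⇑(Equiv.swap i.castSucc i.succ)), basePT_swap Γ hR e i]
    funext x μ
    have hlt : i.val < n := i.isLt
    have hsub : n - (i.castSucc).val = (n - (i.succ).val) + 1 := by
      simp only [Fin.coe_castSucc, Fin.val_succ]; omega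
    rw [hsub, pow_succ]
    ring

lemma basePT_cycle' (Γ : Pt d → Fin d → Fin d → Fin d → ℝ)
    {R : Pt d → (Fin (n+1) → Fin d) → ℝ} (hR : Antisym R)
    (r : Fin (n+1)) (e : Fin (n+1) → (Pt d → Fin d → ℝ)) (x : Pt d) (μ : Fin d) :
    basePT Γ R (Fin.snoc (e ∘ r.succAbove) (e r)) x μ
      = (-1:ℝ)^(n - r.val) * basePT Γ R e x μ :=
  congrFun (congrFun (basePT_cycle Γ hR r e) x) μ

lemma master (κ : ℝ) (Γ : Pt d → Fin d → Fin d → Fin d → ℝ)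
    {R : Pt d → (Fin (n+1) → Fin d) → ℝ} (hR : Antisym R)
    (e : Fin (n+1) → (Pt d → Fin d → ℝ)) (x : Pt d) (μ : Fin d) :
    avgPT κ Γ R e x μ = (1 - (n+1)*κ/2) * basePT Γ R e x μ := by
  unfold avgPT Davg Dbar
  have hterm : ∀ r : Fin (n+1),
      (-1:ℝ)^(n+r.val) * ((1/2) * (covd Γ (Rc R (e ∘ r.succAbove)) (e r) x μ +
        (covd Γ (Rc R (e ∘ r.succAbove)) (e r) x μ
          - κ * basePT Γ R (Fin.snoc (e ∘ r.succAbove) (e r)) x μ)))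
      = (-1:ℝ)^(n+r.val) * covd Γ (Rc R (e ∘ r.succAbove)) (e r) x μ
          - (κ/2) * basePT Γ R e x μ := by
    intro r
    rw [basePT_cycle' Γ hR r e x μ]
    have hpow : (-1:ℝ)^(n+r.val) * (-1:ℝ)^(n - r.val) = 1 := by
      rw [← pow_add,
        show n + r.val + (n - r.val) = 2*n from by omega, pow_mul]
      norm_num
    linear_combination (-(κ/2) * basePT Γ R e x μ) * hpow
  rw [Finset.sum_congr rfl (fun r _ => hterm r), Finset.sum_sub_distrib,
    Finset.sum_const, Finset.card_univ, Fintype.card_fin]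
  unfold basePT
  rw [nsmul_eq_mul]
  push_cast
  ring

end CycleMaster
section Counterexample

/-- The Levi-Civita-style totally antisymmetric symbol on `Fin (n+1)`. -/
def Asgn (n : ℕ) : (Fin (n+1) → Fin (n+1)) → ℝ :=
  fun g => ∑ σ : Equiv.Perm (Fin (n+1)), if g = ⇑σ then ((Equiv.Perm.sign σ : ℤ) : ℝ) else 0

lemma Asgn_comp (n : ℕ) (g : Fin (n+1) → Fin (n+1)) (σ : Equiv.Perm (Fin (n+1))) :
    Asgn n (g ∘ ⇑σ) = ((Equiv.Perm.sign σ : ℤ) : ℝ) * Asgn n g := by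
  unfold Asgn
  rw [Finset.mul_sum]
  apply Fintype.sum_equiv (Equiv.mulRight σ⁻¹)
  intro τ
  show (if g ∘ ⇑σ = ⇑τ then ((Equiv.Perm.sign τ : ℤ) : ℝ) else 0)
      = ((Equiv.Perm.sign σ : ℤ) : ℝ) *
        (if g = ⇑(τ * σ⁻¹) then ((Equiv.Perm.sign (τ * σ⁻¹) : ℤ) : ℝ) else 0)
  have hiff : (g = ⇑(τ * σ⁻¹)) ↔ (g ∘ ⇑σ = ⇑τ) := by
    constructor
    · intro h; funext y
      rw [Function.comp_apply, h]
      simp [Equiv.Perm.mul_apply]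
    · intro h; funext y
      have := congrFun h (σ⁻¹ y)
      simp only [Function.comp_apply, Equiv.Perm.inv_def, Equiv.apply_symm_apply] at this
      simp [Equiv.Perm.mul_apply, this]
  by_cases h : g ∘ ⇑σ = ⇑τ
  · rw [if_pos h, if_pos (hiff.mpr h), Equiv.Perm.sign_mul, Equiv.Perm.sign_inv]
    rcases Int.units_eq_one_or (Equiv.Perm.sign σ) with hs | hs <;>
      simp [hs]
  · rw [if_neg h, if_neg (fun hc => h (hiff.mp hc)), mul_zero]

/-- The multivector `R x g = x 0 * ε(g)`. -/
def Rex (n : ℕ) : Pt (n+1) → (Fin (n+1) → Fin (n+1)) → ℝ :=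
  fun x g => x 0 * Asgn n g

lemma Rex_antisym (n : ℕ) : Antisym (Rex n) := by
  intro x σ μ
  unfold Rex
  rw [Asgn_comp]
  ring

/-- Constant basis 1-forms. -/
def eex (n : ℕ) : Fin (n+1) → (Pt (n+1) → Fin (n+1) → ℝ) :=
  fun i _ j => Pi.single (M := fun _ : Fin (n+1) => ℝ) i 1 j

lemma Asgn_id (n : ℕ) : Asgn n id = 1 := by
  unfold Asgn
  rw [Finset.sum_eq_single (1 : Equiv.Perm (Fin (n+1)))]
  · simp
  · intro σ _ hσ
    rw [if_neg]
    intro h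
    exact hσ (Equiv.coe_fn_injective (h.symm.trans (Equiv.Perm.coe_one).symm))
  · simp

lemma pd_const {d : ℕ} (i : Fin d) (c : ℝ) (x : Pt d) : pd i (fun _ => c) x = 0 := by
  unfold pd
  rw [fderiv_fun_const]
  simp

lemma pd_coord {d : ℕ} (i : Fin d) (x : Pt d) : pd i (fun y : Pt d => y i) x = 1 := by
  unfold pd
  have h : (fun y : Pt d => y i)
      = ⇑(ContinuousLinearMap.proj (R := ℝ) (φ := fun _ : Fin d => ℝ) i) := rfl
  rw [h, ContinuousLinearMap.fderiv]
  simp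

lemma Rfull_ex (n : ℕ) : Rfull (Rex n) (eex n) = fun y => y 0 := by
  funext y
  unfold Rfull
  have hprod : ∀ μ : Fin (n+1) → Fin (n+1),
      (∏ i, eex n i y (μ i)) = if μ = id then 1 else 0 := by
    intro μ
    by_cases h : μ = id
    · subst h; simp [eex]
    · obtain ⟨j, hj⟩ : ∃ j, μ j ≠ j := by
        by_contra hc; push_neg at hc; exact h (funext hc)
      rw [if_neg h]
      exact Finset.prod_eq_zero (Finset.mem_univ j) (by simp [eex, Pi.single_apply, hj])
  calc ∑ μ : Fin (n+1) → Fin (n+1), Rex n y μ * ∏ i, eex n i y (μ i)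
      = ∑ μ : Fin (n+1) → Fin (n+1), if μ = id then Rex n y μ else 0 := by
        apply Finset.sum_congr rfl
        intro μ _
        rw [hprod μ]
        by_cases h : μ = id <;> simp [h]
    _ = Rex n y id := by rw [Finset.sum_ite_eq' Finset.univ id (fun μ => Rex n y μ)]; simp
    _ = y 0 := by unfold Rex; rw [Asgn_id]; ring

lemma basePT_ex (n : ℕ) (x : Pt (n+1)) :
    basePT (fun _ _ _ _ => (0:ℝ)) (Rex n) (eex n) x 0 = -1 := by
  unfold basePT bKos
  have hcovd : ∀ (X : Pt (n+1) → Fin (n+1) → ℝ) (r : Fin (n+1)),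
      covd (fun _ _ _ _ => (0:ℝ)) X (eex n r) x 0 = 0 := by
    intro X r
    unfold covd
    apply Finset.sum_eq_zero
    intro μ _
    simp only [eex]
    rw [pd_const]
    simp
  have hiota : ∀ (X : Pt (n+1) → Fin (n+1) → ℝ) (r : Fin (n+1)),
      iotaD X (eex n r) x 0 = 0 := by
    intro X r
    unfold iotaD
    apply Finset.sum_eq_zero
    intro ν _
    simp only [eex]
    rw [pd_const, pd_const]
    simp
  rw [Rfull_ex]
  simp only [hcovd, hiota, mul_zero, Finset.sum_const_zero, pd_coord]
  ring

end Counterexample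
lemma Rex_smooth (n : ℕ) : SmMV (Rex n) := by
  intro g
  unfold Rex
  exact ((ContinuousLinearMap.proj (R := ℝ) (φ := fun _ : Fin (n+1) => ℝ) 0).contDiff).mul
    contDiff_const
/-- the polytorsion of the higher average connection
`∇^{E_n,avg} = (1/2)(•∇^{E_n} + ∇̄^{E_n})` vanishes (for all data) if and only if
`κ_n = 2/(n+1)`. -/
theorem average_connection_torsion_free_iff {n : ℕ} (hn : 1 ≤ n) (κ : ℝ) :
    (∀ (d : ℕ) (Γ : Pt d → Fin d → Fin d → Fin d → ℝ)
      (R : Pt d → (Fin (n+1) → Fin d) → ℝ)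
      (e : Fin (n+1) → (Pt d → Fin d → ℝ)),
      (∀ m a b, ContDiff ℝ (⊤ : ℕ∞) (fun x => Γ x m a b)) →
      Antisym R → SmMV R → (∀ i, SmForm (e i)) →
      ∀ (x : Pt d) (μ : Fin d), avgPT κ Γ R e x μ = 0)
    ↔ κ = 2 / (n + 1) := by
  constructor
  · intro h
    have hx := h (n+1) (fun _ _ _ _ => 0) (Rex n) (eex n)
      (fun _ _ _ => contDiff_const) (Rex_antisym n) (Rex_smooth n)
      (fun _ _ => contDiff_const) (fun _ => 0) 0
    rw [master κ _ (Rex_antisym n) (eex n) _ 0, basePT_ex n] at hx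
    have hne : ((n:ℝ)+1) ≠ 0 := by positivity
    field_simp at hx ⊢
    linarith
  · intro hκ d Γ R e hΓ hA hS hF x μ
    rw [master κ Γ hA e x μ, hκ]
    have hne : ((n:ℝ)+1) ≠ 0 := by positivity
    have h0 : (1 - ((n:ℝ)+1) * (2/((n:ℝ)+1)) / 2) = 0 := by field_simp; ring
    rw [h0, zero_mul]
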